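/- arXiv:1805.12063 — 3 statements merged into one kernel-verified Lean document; each statement's English description precedes it below -/
import Mathlib

section
/- Let d ≥ 2 be an integer and let (ξ_j)_{j≥0} be a sequence of unit vectors in ℝ^d whose set of terms {ξ_j : j ≥ 0} is dense in the unit sphere S^{d−1}. Then the set K = {0} ∪ ⋃_{j≥0} T_j asymptotically and omnidirectionally contains arithmetic progressions: for every integer k ≥ 3, every ε ∈ (0,1) and every unit vector e ∈ S^{d−1}, K contains a (k,ε,{e})-AP. -/
open Metric Set

/-- `P` is an arithmetic patch of size `k` and scale `Δ` with orientation `e : Fin m → ℝ^d`. -/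
def IsAPatch {d : ℕ} (m k : ℕ) (Δ : ℝ) (e : Fin m → EuclideanSpace ℝ (Fin d))
    (P : Set (EuclideanSpace ℝ (Fin d))) : Prop :=
  ∃ t : EuclideanSpace ℝ (Fin d),
    P = {p | ∃ x : Fin m → Fin k, p = t + Δ • ∑ i, ((x i : ℕ) : ℝ) • e i}

/-- `Q` is a `(k, ε, {e₁,…,eₘ})`-AP with approximating arithmetic patch of scale `Δ`. -/
def IsAPScale {d : ℕ} (m k : ℕ) (ε Δ : ℝ) (e : Fin m → EuclideanSpace ℝ (Fin d))
    (Q : Set (EuclideanSpace ℝ (Fin d))) : Prop :=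
  0 < Δ ∧ ∃ P : Set (EuclideanSpace ℝ (Fin d)), IsAPatch m k Δ e P ∧
    Q.ncard = P.ncard ∧ ∀ x ∈ P, Metric.infDist x Q ≤ ε * Δ

/-- `Q` is a `(k, ε, {e₁,…,eₘ})`-AP. -/
def IsAP {d : ℕ} (m k : ℕ) (ε : ℝ) (e : Fin m → EuclideanSpace ℝ (Fin d))
    (Q : Set (EuclideanSpace ℝ (Fin d))) : Prop :=
  ∃ Δ : ℝ, IsAPScale m k ε Δ e Q

/-- `N(E, r)`: the smallest number of open sets of diameter at most `r` needed to cover `E`. -/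
noncomputable def coverNumber {X : Type*} [MetricSpace X] (E : Set X) (r : ℝ) : ℕ :=
  sInf {n : ℕ | ∃ 𝒰 : Finset (Set X), 𝒰.card = n ∧
    (∀ U ∈ 𝒰, IsOpen U ∧ Metric.diam U ≤ r) ∧ E ⊆ ⋃₀ ↑𝒰}

/-- The Assouad dimension of `F`. -/
noncomputable def assouadDim {X : Type*} [MetricSpace X] (F : Set X) : ℝ :=
  sInf {σ : ℝ | 0 ≤ σ ∧ ∃ C > 0, ∀ x ∈ F, ∀ R > 0, ∀ r ∈ Set.Ioo 0 R,
    (coverNumber (Metric.closedBall x R ∩ F) r : ℝ) ≤ C * (R / r) ^ σ}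

/-- `ℓ({e₁,…,eₘ})`: the minimum of `‖ω₁e₁ + ⋯ + ωₘeₘ‖` over `ω ∈ {0,1}^m \ {0}`. -/
noncomputable def ellOf {d m : ℕ} (e : Fin m → EuclideanSpace ℝ (Fin d)) : ℝ :=
  sInf {l : ℝ | ∃ ω : Fin m → Bool, ω ≠ (fun _ => false) ∧
    l = ‖∑ i, if ω i then e i else (0 : EuclideanSpace ℝ (Fin d))‖}

/-- `F` asymptotically and omnidirectionally contains arithmetic progressions. -/
def AsympOmniContainsAPs {d : ℕ} (F : Set (EuclideanSpace ℝ (Fin d))) : Prop :=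
  ∀ k : ℕ, 3 ≤ k → ∀ ε ∈ Set.Ioo (0 : ℝ) 1, ∀ e : EuclideanSpace ℝ (Fin d), ‖e‖ = 1 →
    ∃ Q ⊆ F, IsAP 1 k ε (fun _ => e) Q

/-- The first standard basis vector `e₁ = (1,0,…,0)` of `ℝ^d`. -/
noncomputable def stdE₁ (d : ℕ) : EuclideanSpace ℝ (Fin d) :=
  (EuclideanSpace.equiv (Fin d) ℝ).symm (fun i => if (i : ℕ) = 0 then 1 else 0)

/-- The segment `T_j = {t ξ_j + 2⁻ʲ e₁ : t ∈ [-2^{-(j+2)}, 2^{-(j+2)}]}`. -/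
noncomputable def Tseg {d : ℕ} (ξ : ℕ → EuclideanSpace ℝ (Fin d)) (j : ℕ) :
    Set (EuclideanSpace ℝ (Fin d)) :=
  (fun t : ℝ => t • ξ j + ((1 : ℝ) / 2 ^ j) • stdE₁ d) ''
    Set.Icc (-((1 : ℝ) / 2 ^ (j + 2))) ((1 : ℝ) / 2 ^ (j + 2))

/-- `K = {0} ∪ ⋃_j T_j`. -/
noncomputable def Kset {d : ℕ} (ξ : ℕ → EuclideanSpace ℝ (Fin d)) :
    Set (EuclideanSpace ℝ (Fin d)) :=
  {0} ∪ ⋃ j : ℕ, Tseg ξ j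

/-- The diamond `D_j = {t₁ξ_{1j} + ⋯ + tₘξ_{mj} + 2⁻ʲ e₁ : tᵢ ∈ [-1/(m 2^{j+2}), 1/(m 2^{j+2})]}`. -/
noncomputable def Dcell {d : ℕ} (m : ℕ) (ξ : ℕ → Fin m → EuclideanSpace ℝ (Fin d)) (j : ℕ) :
    Set (EuclideanSpace ℝ (Fin d)) :=
  (fun t : Fin m → ℝ => (∑ i, t i • ξ j i) + ((1 : ℝ) / 2 ^ j) • stdE₁ d) ''
    {t | ∀ i, t i ∈ Set.Icc (-(1 / ((m : ℝ) * 2 ^ (j + 2)))) (1 / ((m : ℝ) * 2 ^ (j + 2)))}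

/-- `K = {0} ∪ ⋃_j D_j`. -/
noncomputable def KsetD {d : ℕ} (m : ℕ) (ξ : ℕ → Fin m → EuclideanSpace ℝ (Fin d)) :
    Set (EuclideanSpace ℝ (Fin d)) :=
  {0} ∪ ⋃ j : ℕ, Dcell m ξ j

/-! Take `ξ_j` within `ε / k` of `e`. The segment `T_j` has length `2^{-(j+1)}`, so it contains the
progression `2^{-j} e₁ + x Δ ξ_j`, `x < k`, with `Δ = 1 / (k 2^{j+2})`; its `x`-th point lies within
`x Δ ‖e - ξ_j‖ ≤ (k - 1) Δ ε / k < ε Δ` of the corresponding point of the patch `2^{-j} e₁ + x Δ e`. -/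

section ArithProg

variable {d : ℕ}

def arithProg (t : EuclideanSpace ℝ (Fin d)) (Δ : ℝ) (v : EuclideanSpace ℝ (Fin d)) (k : ℕ) :
    Fin k → EuclideanSpace ℝ (Fin d) :=
  fun x => t + Δ • ((x : ℕ) : ℝ) • v

theorem arithProg_injective {t v : EuclideanSpace ℝ (Fin d)} {Δ : ℝ} (hΔ : Δ ≠ 0) (hv : v ≠ 0)
    (k : ℕ) : Function.Injective (arithProg t Δ v k) := by
  intro x y hxy
  simp only [arithProg, add_right_inj, smul_right_injective _ hΔ |>.eq_iff] at hxy
  exact Fin.ext (by exact_mod_cast smul_left_injective ℝ hv hxy)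

theorem ncard_range_arithProg {t v : EuclideanSpace ℝ (Fin d)} {Δ : ℝ} (hΔ : Δ ≠ 0) (hv : v ≠ 0)
    (k : ℕ) : (range (arithProg t Δ v k)).ncard = k := by
  rw [← Nat.card_coe_set_eq, Nat.card_range_of_injective (arithProg_injective hΔ hv k),
    Nat.card_fin]

theorem isAPatch_range_arithProg (t e : EuclideanSpace ℝ (Fin d)) (Δ : ℝ) (k : ℕ) :
    IsAPatch 1 k Δ (fun _ => e) (range (arithProg t Δ e k)) := by
  refine ⟨t, Set.ext fun p => ⟨?_, ?_⟩⟩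
  · rintro ⟨x, rfl⟩
    exact ⟨fun _ => x, by simp [arithProg]⟩
  · rintro ⟨x, rfl⟩
    exact ⟨x 0, by simp [arithProg]⟩

theorem dist_arithProg (t e v : EuclideanSpace ℝ (Fin d)) {Δ : ℝ} (hΔ : 0 ≤ Δ) {k : ℕ}
    (x : Fin k) : dist (arithProg t Δ e k x) (arithProg t Δ v k x) = Δ * x * ‖e - v‖ := by
  rw [dist_eq_norm, arithProg, arithProg, add_sub_add_left_eq_sub, ← smul_sub, ← smul_sub,
    norm_smul, norm_smul, Real.norm_of_nonneg hΔ, Real.norm_natCast, mul_assoc]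

theorem isAP_range_arithProg {t e v : EuclideanSpace ℝ (Fin d)} {Δ ε : ℝ} {k : ℕ} (hΔ : 0 < Δ)
    (he : e ≠ 0) (hv : v ≠ 0) (hev : ((k : ℝ) - 1) * ‖e - v‖ ≤ ε) :
    IsAP 1 k ε (fun _ => e) (range (arithProg t Δ v k)) := by
  refine ⟨Δ, hΔ, _, isAPatch_range_arithProg t e Δ k, ?_, ?_⟩
  · rw [ncard_range_arithProg hΔ.ne' hv, ncard_range_arithProg hΔ.ne' he]
  rintro _ ⟨x, rfl⟩
  have hx : (x : ℝ) ≤ k - 1 := by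
    have : (x : ℝ) + 1 ≤ k := by exact_mod_cast x.is_lt
    linarith
  calc infDist (arithProg t Δ e k x) (range (arithProg t Δ v k))
      ≤ dist (arithProg t Δ e k x) (arithProg t Δ v k x) := infDist_le_dist_of_mem ⟨x, rfl⟩
    _ = Δ * (x * ‖e - v‖) := by rw [dist_arithProg t e v hΔ.le, mul_assoc]
    _ ≤ Δ * (((k : ℝ) - 1) * ‖e - v‖) := by gcongr
    _ ≤ ε * Δ := by rw [mul_comm ε]; gcongr

theorem range_arithProg_subset_Tseg (ξ : ℕ → EuclideanSpace ℝ (Fin d)) (j : ℕ) {Δ : ℝ} {k : ℕ}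
    (hΔ : 0 ≤ Δ) (hkΔ : k * Δ ≤ 1 / 2 ^ (j + 2)) :
    range (arithProg ((1 / 2 ^ j : ℝ) • stdE₁ d) Δ (ξ j) k) ⊆ Tseg ξ j := by
  rintro _ ⟨x, rfl⟩
  refine ⟨Δ * x, ⟨?_, ?_⟩, by rw [arithProg, smul_smul, add_comm]⟩
  · have : (0 : ℝ) < 1 / 2 ^ (j + 2) := by positivity
    linarith [mul_nonneg hΔ x.val.cast_nonneg]
  · have : (x : ℝ) ≤ k := by exact_mod_cast x.is_lt.le
    nlinarith

end ArithProg

theorem Kset_asympOmni_general (d : ℕ) (ξ : ℕ → EuclideanSpace ℝ (Fin d))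
    (hξ : ∀ j, ‖ξ j‖ = 1)
    (hdense : Metric.sphere (0 : EuclideanSpace ℝ (Fin d)) 1 ⊆ closure (Set.range ξ)) :
    AsympOmniContainsAPs (Kset ξ) := by
  rintro k hk ε ⟨hε, -⟩ e he
  have hk0 : (0 : ℝ) < k := Nat.cast_pos.mpr (by omega)
  obtain ⟨_, ⟨j, rfl⟩, hej⟩ := Metric.mem_closure_iff.mp
    (hdense (mem_sphere_zero_iff_norm.mpr he)) (ε / k) (by positivity)
  have hclose : ((k : ℝ) - 1) * ‖e - ξ j‖ ≤ ε := by
    rw [dist_eq_norm, lt_div_iff₀ hk0] at hej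
    linarith [norm_nonneg (e - ξ j)]
  obtain ⟨Δ, hΔ, hkΔ⟩ : ∃ Δ : ℝ, 0 < Δ ∧ k * Δ = 1 / 2 ^ (j + 2) :=
    ⟨1 / (k * 2 ^ (j + 2)), by positivity, by field_simp⟩
  have hunit : ∀ {v : EuclideanSpace ℝ (Fin d)}, ‖v‖ = 1 → v ≠ 0 := fun hv =>
    norm_ne_zero_iff.mp (hv ▸ one_ne_zero)
  refine ⟨_, ?_, isAP_range_arithProg (t := (1 / 2 ^ j : ℝ) • stdE₁ d) hΔ (hunit he)
    (hunit (hξ j)) hclose⟩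
  exact (range_arithProg_subset_Tseg ξ j hΔ.le hkΔ.le).trans
    (subset_union_of_subset_right (subset_iUnion (Tseg ξ) j) _)

/-- If the unit vectors `ξ_j` are dense in the unit sphere `S^{d-1}`, then
`K = {0} ∪ ⋃_j T_j` asymptotically and omnidirectionally contains arithmetic progressions. -/
theorem Kset_asympOmni (d : ℕ) (hd : 2 ≤ d) (ξ : ℕ → EuclideanSpace ℝ (Fin d))
    (hξ : ∀ j, ‖ξ j‖ = 1)
    (hdense : Metric.sphere (0 : EuclideanSpace ℝ (Fin d)) 1 ⊆ closure (Set.range ξ)) :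
    AsympOmniContainsAPs (Kset ξ) :=
  Kset_asympOmni_general d ξ hξ hdense
end

section
/- Let d ≥ 2 be an integer and let (ξ_j)_{j≥0} be any sequence of unit vectors in ℝ^d. For the set K = {0} ∪ ⋃_{j≥0} T_j there exists a constant C > 0 such that N(B(x,R) ∩ K, r) ≤ C·R/r for all x ∈ K and all 0 < r < R. In particular, the Assouad dimension of K is at most 1. -/
open Metric Set

/-!
Each segment `T_j` is an isometric image of an interval, so its intersection with `B(x, R)` is
covered by `O(1 + min(2⁻ʲ, R) / r)` balls of radius `r / 2`, and all segments with `2⁻ʲ ≲ r` fit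
into a single such ball about the origin. For the remaining segments meeting `B(x, R)`: if
`|x| ≲ R` then `2⁻ʲ ≲ R`, and the geometric sum of the `2⁻ʲ / r` is `O(R / r)`; if `|x| ≫ R` then
`2⁻ʲ ≈ |x|`, so only boundedly many scales occur, each contributing `O(R / r)`.
-/

section Covering

variable {X : Type*} [MetricSpace X]

def CoverableBy (E : Set X) (r : ℝ) (n : ℕ) : Prop :=
  ∃ 𝒰 : Finset (Set X), 𝒰.card ≤ n ∧ (∀ U ∈ 𝒰, IsOpen U ∧ diam U ≤ r) ∧ E ⊆ ⋃₀ ↑𝒰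

namespace CoverableBy

variable {E F : Set X} {r : ℝ} {m n : ℕ}

theorem coverNumber_le (h : CoverableBy E r n) : coverNumber E r ≤ n := by
  obtain ⟨𝒰, hcard, hU, hE⟩ := h
  exact (Nat.sInf_le ⟨𝒰, rfl, hU, hE⟩ : coverNumber E r ≤ 𝒰.card).trans hcard

theorem mono (h : CoverableBy F r n) (hEF : E ⊆ F) : CoverableBy E r n := by
  obtain ⟨𝒰, hcard, hU, hF⟩ := h
  exact ⟨𝒰, hcard, hU, hEF.trans hF⟩

theorem union (hE : CoverableBy E r m) (hF : CoverableBy F r n) :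
    CoverableBy (E ∪ F) r (m + n) := by
  classical
  obtain ⟨𝒰, h𝒰card, h𝒰, hE⟩ := hE
  obtain ⟨𝒱, h𝒱card, h𝒱, hF⟩ := hF
  refine ⟨𝒰 ∪ 𝒱, (Finset.card_union_le _ _).trans (add_le_add h𝒰card h𝒱card), ?_, ?_⟩
  · intro U hU
    rcases Finset.mem_union.1 hU with hU | hU
    exacts [h𝒰 U hU, h𝒱 U hU]
  · rw [Finset.coe_union, sUnion_union]
    exact union_subset_union hE hF

theorem biUnion {ι : Type*} {E : ι → Set X} {n : ι → ℕ} {J : Finset ι}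
    (h : ∀ j ∈ J, CoverableBy (E j) r (n j)) :
    CoverableBy (⋃ j ∈ J, E j) r (∑ j ∈ J, n j) := by
  classical
  induction J using Finset.induction_on with
  | empty => exact ⟨∅, le_rfl, by simp, by simp⟩
  | insert j J hj ih =>
    rw [Finset.set_biUnion_insert, Finset.sum_insert hj]
    exact (h j (Finset.mem_insert_self j J)).union
      (ih fun i hi => h i (Finset.mem_insert_of_mem hi))

end CoverableBy

theorem coverableBy_ball (z : X) {r : ℝ} (hr : 0 ≤ r) : CoverableBy (ball z (r / 2)) r 1 := by
  refine ⟨{ball z (r / 2)}, le_rfl, ?_, by simp⟩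
  simp only [Finset.mem_singleton, forall_eq]
  exact ⟨isOpen_ball, (diam_ball (by positivity)).trans_eq (by ring)⟩

theorem coverableBy_image_Icc {f : ℝ → X} (hf : LipschitzWith 1 f) {r : ℝ} (hr : 0 < r)
    (a b : ℝ) : CoverableBy (f '' Icc a b) r (⌊(b - a) / (r / 2)⌋₊ + 1) := by
  classical
  set N := ⌊(b - a) / (r / 2)⌋₊
  refine ⟨(Finset.range (N + 1)).image fun i : ℕ => ball (f (a + i * (r / 2))) (r / 2),
    Finset.card_image_le.trans (Finset.card_range _).le, ?_, ?_⟩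
  · simp only [Finset.mem_image, forall_exists_index, and_imp, forall_apply_eq_imp_iff₂]
    exact fun i _ => ⟨isOpen_ball, (diam_ball (by positivity)).trans_eq (by ring)⟩
  · rintro _ ⟨t, ⟨hat, htb⟩, rfl⟩
    have hr2 : 0 < r / 2 := by positivity
    set i := ⌊(t - a) / (r / 2)⌋₊
    have hi : i ≤ N := Nat.floor_le_floor (by gcongr)
    have hi_le : (i : ℝ) * (r / 2) ≤ t - a :=
      (le_div_iff₀ hr2).1 (Nat.floor_le (div_nonneg (by linarith) hr2.le))
    have hi_lt : t - a < (i + 1) * (r / 2) := (div_lt_iff₀ hr2).1 (Nat.lt_floor_add_one _)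
    refine ⟨_, Finset.mem_image_of_mem _ (Finset.mem_range.2 (Nat.lt_succ_of_le hi)), ?_⟩
    rw [mem_ball]
    calc dist (f t) (f (a + i * (r / 2))) ≤ dist t (a + i * (r / 2)) := by
          simpa using hf.dist_le_mul t (a + i * (r / 2))
      _ < r / 2 := by
          rw [Real.dist_eq, abs_lt]
          constructor <;> linarith

theorem exists_coverableBy_image_Icc_inter_closedBall {f : ℝ → X} (hf : Isometry f) {r : ℝ}
    (hr : 0 < r) {a b R : ℝ} {x : X} (hne : (f '' Icc a b ∩ closedBall x R).Nonempty) :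
    ∃ n : ℕ, CoverableBy (f '' Icc a b ∩ closedBall x R) r n ∧
      (n : ℝ) ≤ 2 * (b - a) / r + 1 ∧ (n : ℝ) ≤ 8 * R / r + 1 := by
  obtain ⟨_, ⟨t₀, ⟨hat₀, ht₀b⟩, rfl⟩, ht₀R⟩ := hne
  set a' := max a (t₀ - 2 * R)
  set b' := min b (t₀ + 2 * R)
  have hR : 0 ≤ R := dist_nonneg.trans ht₀R
  have hlen : 0 ≤ b' - a' := by
    simp only [a', b', sub_nonneg, max_le_iff, le_min_iff]
    refine ⟨⟨by linarith, by linarith⟩, by linarith, by linarith⟩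
  have hsub : f '' Icc a b ∩ closedBall x R ⊆ f '' Icc a' b' := by
    rintro _ ⟨⟨t, ⟨hat, htb⟩, rfl⟩, htR⟩
    have htt₀ : |t - t₀| ≤ 2 * R := by
      rw [← Real.dist_eq, ← hf.dist_eq]
      linarith [dist_triangle_right (f t) (f t₀) x, mem_closedBall.1 htR, mem_closedBall.1 ht₀R]
    obtain ⟨h₁, h₂⟩ := abs_le.1 htt₀
    exact ⟨t, ⟨max_le hat (by linarith), le_min htb (by linarith)⟩, rfl⟩
  have hfloor : (⌊(b' - a') / (r / 2)⌋₊ : ℝ) ≤ 2 * (b' - a') / r :=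
    (Nat.floor_le (by positivity)).trans_eq (by field_simp)
  refine ⟨_, (coverableBy_image_Icc hf.lipschitz hr a' b').mono hsub, ?_, ?_⟩
  · push_cast
    have : b' - a' ≤ b - a := sub_le_sub (min_le_left _ _) (le_max_left _ _)
    have : 2 * (b' - a') / r ≤ 2 * (b - a) / r := by gcongr
    linarith
  · push_cast
    have : b' - a' ≤ 4 * R := by
      linarith [min_le_right b (t₀ + 2 * R), le_max_right a (t₀ - 2 * R)]
    have : 2 * (b' - a') / r ≤ 8 * R / r := by
      rw [div_le_div_iff_of_pos_right hr]; linarith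
    linarith

end Covering

section Dyadic

theorem sum_inv_two_pow_le {J : Finset ℕ} {c : ℝ} (hc : 0 ≤ c)
    (h : ∀ j ∈ J, ((2 : ℝ) ^ j)⁻¹ ≤ c) : ∑ j ∈ J, ((2 : ℝ) ^ j)⁻¹ ≤ 2 * c := by
  rcases J.eq_empty_or_nonempty with rfl | hJ
  · simpa using hc
  set k := J.min' hJ
  have hJk : J ⊆ Finset.Ico k (J.max' hJ + 1) := fun j hj =>
    Finset.mem_Ico.2 ⟨J.min'_le j hj, Nat.lt_succ_of_le (J.le_max' j hj)⟩
  calc ∑ j ∈ J, ((2 : ℝ) ^ j)⁻¹ = ∑ j ∈ J, (2⁻¹ : ℝ) ^ j := by simp only [inv_pow]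
    _ ≤ ∑ j ∈ Finset.Ico k (J.max' hJ + 1), (2⁻¹ : ℝ) ^ j :=
        Finset.sum_le_sum_of_subset_of_nonneg hJk fun _ _ _ => by positivity
    _ ≤ (2⁻¹ : ℝ) ^ k / (1 - 2⁻¹) := geom_sum_Ico_le_of_lt_one (by norm_num) (by norm_num)
    _ = 2 * ((2 : ℝ) ^ k)⁻¹ := by rw [inv_pow]; ring
    _ ≤ 2 * c := by linarith [h k (J.min'_mem hJ)]

theorem card_mul_le_of_inv_two_pow_mem_Icc {J : Finset ℕ} {a c : ℝ} (hc : 0 ≤ c)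
    (h : ∀ j ∈ J, ((2 : ℝ) ^ j)⁻¹ ∈ Icc a c) : J.card * a ≤ 2 * c :=
  calc J.card * a = ∑ _j ∈ J, a := by simp
    _ ≤ ∑ j ∈ J, ((2 : ℝ) ^ j)⁻¹ := Finset.sum_le_sum fun j hj => (h j hj).1
    _ ≤ 2 * c := sum_inv_two_pow_le hc fun j hj => (h j hj).2

theorem finite_setOf_le_inv_two_pow {c : ℝ} (hc : 0 < c) :
    {j : ℕ | c ≤ ((2 : ℝ) ^ j)⁻¹}.Finite := by
  obtain ⟨N, hN⟩ := exists_pow_lt_of_lt_one hc (by norm_num : (2⁻¹ : ℝ) < 1)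
  refine (finite_Iio N).subset fun j (hj : c ≤ _) => ?_
  by_contra hjN
  have : (2⁻¹ : ℝ) ^ j ≤ 2⁻¹ ^ N :=
    pow_le_pow_of_le_one (by norm_num) (by norm_num) (not_lt.1 hjN)
  rw [inv_pow] at this
  linarith

theorem sum_le_of_inv_two_pow_near {J : Finset ℕ} {n : ℕ → ℝ} {ρ R r : ℝ} (hr : 0 < r)
    (hrR : r ≤ R)
    (h : ∀ j ∈ J, 2 * r / 5 ≤ ((2 : ℝ) ^ j)⁻¹ ∧ |ρ - ((2 : ℝ) ^ j)⁻¹| ≤ ((2 : ℝ) ^ j)⁻¹ / 4 + R ∧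
      n j ≤ ((2 : ℝ) ^ j)⁻¹ / r + 1 ∧ n j ≤ 8 * R / r + 1) :
    ∑ j ∈ J, n j ≤ 90 * (R / r) := by
  have hR : 0 < R := hr.trans_le hrR
  rcases le_or_gt ρ (2 * R) with hρ | hρ
  · have hsum : ∑ j ∈ J, ((2 : ℝ) ^ j)⁻¹ ≤ 2 * (4 * R) :=
      sum_inv_two_pow_le (by positivity) fun j hj => by
        linarith [(abs_le.1 (h j hj).2.1).1]
    calc ∑ j ∈ J, n j ≤ ∑ j ∈ J, 7 / (2 * r) * ((2 : ℝ) ^ j)⁻¹ := by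
          refine Finset.sum_le_sum fun j hj => ?_
          obtain ⟨hs, -, hn, -⟩ := h j hj
          have : 1 ≤ 5 / (2 * r) * ((2 : ℝ) ^ j)⁻¹ := by
            rw [div_mul_eq_mul_div, le_div_iff₀ (by positivity)]; linarith
          calc n j ≤ ((2 : ℝ) ^ j)⁻¹ / r + 1 := hn
            _ ≤ ((2 : ℝ) ^ j)⁻¹ / r + 5 / (2 * r) * ((2 : ℝ) ^ j)⁻¹ := by linarith
            _ = 7 / (2 * r) * ((2 : ℝ) ^ j)⁻¹ := by ring
      _ = 7 / (2 * r) * ∑ j ∈ J, ((2 : ℝ) ^ j)⁻¹ := by rw [Finset.mul_sum]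
      _ ≤ 7 / (2 * r) * (2 * (4 * R)) := by gcongr
      _ = 28 * (R / r) := by field_simp; ring
      _ ≤ 90 * (R / r) := by linarith [div_pos hR hr]
  · have hcard : (J.card : ℝ) * (2 * ρ / 5) ≤ 2 * (2 * ρ) :=
      card_mul_le_of_inv_two_pow_mem_Icc (by linarith) fun j hj => by
        obtain ⟨h₁, h₂⟩ := abs_le.1 (h j hj).2.1
        constructor <;> linarith
    have hcard' : (J.card : ℝ) ≤ 10 := by nlinarith
    have hRr : 1 ≤ R / r := (one_le_div hr).2 hrR
    calc ∑ j ∈ J, n j ≤ ∑ _j ∈ J, 9 * (R / r) := by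
          refine Finset.sum_le_sum fun j hj => ?_
          have := (h j hj).2.2.2
          rw [mul_div_assoc] at this
          linarith
      _ = J.card * (9 * (R / r)) := by simp
      _ ≤ 10 * (9 * (R / r)) := by gcongr
      _ = 90 * (R / r) := by ring

end Dyadic

theorem isometry_smul_add {E : Type*} [NormedAddCommGroup E] [NormedSpace ℝ E] {v : E}
    (hv : ‖v‖ = 1) (c : E) : Isometry fun t : ℝ => t • v + c :=
  Isometry.of_dist_eq fun s t => by
    rw [dist_eq_norm, add_sub_add_right_eq_sub, ← sub_smul, norm_smul, hv, mul_one,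
      Real.dist_eq, Real.norm_eq_abs]

section Segments

variable {d : ℕ} {ξ : ℕ → EuclideanSpace ℝ (Fin d)}

theorem norm_stdE₁ (hd : 0 < d) : ‖stdE₁ d‖ = 1 := by
  have : stdE₁ d = PiLp.single 2 (⟨0, hd⟩ : Fin d) (1 : ℝ) := by
    ext i
    simp [stdE₁, PiLp.single_apply, Fin.ext_iff]
  rw [this, PiLp.norm_single, norm_one]

theorem abs_norm_sub_inv_two_pow_le_of_mem_Tseg (hd : 0 < d) {j : ℕ} (hξ : ‖ξ j‖ = 1)
    {y : EuclideanSpace ℝ (Fin d)} (hy : y ∈ Tseg ξ j) :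
    |‖y‖ - ((2 : ℝ) ^ j)⁻¹| ≤ ((2 : ℝ) ^ j)⁻¹ / 4 := by
  obtain ⟨t, ht, rfl⟩ := hy
  have hc : ‖((1 : ℝ) / 2 ^ j) • stdE₁ d‖ = ((2 : ℝ) ^ j)⁻¹ := by
    rw [norm_smul, norm_stdE₁ hd, mul_one, Real.norm_of_nonneg (by positivity), one_div]
  have hh : (1 : ℝ) / 2 ^ (j + 2) = ((2 : ℝ) ^ j)⁻¹ / 4 := by rw [pow_add]; ring
  rw [hh] at ht
  calc |‖t • ξ j + ((1 : ℝ) / 2 ^ j) • stdE₁ d‖ - ((2 : ℝ) ^ j)⁻¹|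
      ≤ ‖t • ξ j + ((1 : ℝ) / 2 ^ j) • stdE₁ d - ((1 : ℝ) / 2 ^ j) • stdE₁ d‖ := by
        rw [← hc]; exact abs_norm_sub_norm_le _ _
    _ = |t| := by rw [add_sub_cancel_right, norm_smul, hξ, mul_one, Real.norm_eq_abs]
    _ ≤ ((2 : ℝ) ^ j)⁻¹ / 4 := abs_le.2 ht

theorem exists_coverableBy_closedBall_inter_Tseg {j : ℕ} (hξ : ‖ξ j‖ = 1) {r : ℝ} (hr : 0 < r)
    {x : EuclideanSpace ℝ (Fin d)} {R : ℝ} (hne : (closedBall x R ∩ Tseg ξ j).Nonempty) :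
    ∃ n : ℕ, CoverableBy (closedBall x R ∩ Tseg ξ j) r n ∧
      (n : ℝ) ≤ ((2 : ℝ) ^ j)⁻¹ / r + 1 ∧ (n : ℝ) ≤ 8 * R / r + 1 := by
  rw [inter_comm] at hne ⊢
  obtain ⟨n, hn, hlen, hR⟩ :=
    exists_coverableBy_image_Icc_inter_closedBall (isometry_smul_add hξ _) hr hne
  refine ⟨n, hn, hlen.trans_eq ?_, hR⟩
  rw [pow_add]
  field_simp
  ring

end Segments

theorem exists_coverableBy_closedBall_inter_Kset {d : ℕ} (hd : 0 < d)
    {ξ : ℕ → EuclideanSpace ℝ (Fin d)} (hξ : ∀ j, ‖ξ j‖ = 1) (x : EuclideanSpace ℝ (Fin d))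
    {R r : ℝ} (hr : 0 < r) (hrR : r ≤ R) :
    ∃ n : ℕ, CoverableBy (closedBall x R ∩ Kset ξ) r n ∧ (n : ℝ) ≤ 91 * (R / r) := by
  classical
  have hfin := (finite_setOf_le_inv_two_pow (c := 2 * r / 5) (by positivity)).subset
    (inter_subset_left (t := {j | (closedBall x R ∩ Tseg ξ j).Nonempty}))
  set J := hfin.toFinset
  have hJ (j : ℕ) : j ∈ J ↔ 2 * r / 5 ≤ ((2 : ℝ) ^ j)⁻¹ ∧ (closedBall x R ∩ Tseg ξ j).Nonempty :=
    hfin.mem_toFinset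
  choose! n hn using fun j (hj : j ∈ J) =>
    exists_coverableBy_closedBall_inter_Tseg (hξ j) hr ((hJ j).1 hj).2
  -- segments at scales `2⁻ʲ < 2r/5` lie in the ball of radius `r/2` about the origin
  have hsub : closedBall x R ∩ Kset ξ ⊆ ball 0 (r / 2) ∪ ⋃ j ∈ J, closedBall x R ∩ Tseg ξ j := by
    rintro y ⟨hyx, rfl | hyT⟩
    · exact Or.inl (mem_ball_self (by positivity))
    obtain ⟨j, hyj⟩ := mem_iUnion.1 hyT
    by_cases hj : 2 * r / 5 ≤ ((2 : ℝ) ^ j)⁻¹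
    · exact Or.inr (mem_biUnion ((hJ j).2 ⟨hj, y, hyx, hyj⟩) ⟨hyx, hyj⟩)
    · left
      rw [mem_ball_zero_iff]
      linarith [(abs_le.1 (abs_norm_sub_inv_two_pow_le_of_mem_Tseg hd (hξ j) hyj)).2]
  refine ⟨1 + ∑ j ∈ J, n j,
    ((coverableBy_ball 0 hr.le).union (CoverableBy.biUnion fun j hj => (hn j hj).1)).mono hsub,
    ?_⟩
  have hsum : ∑ j ∈ J, (n j : ℝ) ≤ 90 * (R / r) := by
    refine sum_le_of_inv_two_pow_near (ρ := ‖x‖) hr hrR fun j hj => ?_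
    obtain ⟨hjr, y, hyx, hyj⟩ := (hJ j).1 hj
    have hy := abs_norm_sub_inv_two_pow_le_of_mem_Tseg hd (hξ j) hyj
    have hxy : |‖x‖ - ‖y‖| ≤ R :=
      (abs_norm_sub_norm_le x y).trans ((dist_eq_norm x y).symm.trans_le (mem_closedBall'.1 hyx))
    refine ⟨hjr, ?_, (hn j hj).2⟩
    calc |‖x‖ - ((2 : ℝ) ^ j)⁻¹| ≤ |‖x‖ - ‖y‖| + |‖y‖ - ((2 : ℝ) ^ j)⁻¹| := abs_sub_le _ _ _
      _ ≤ ((2 : ℝ) ^ j)⁻¹ / 4 + R := by linarith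
  push_cast
  linarith [(one_le_div hr).2 hrR]

/-- For any sequence of unit vectors `ξ_j` in `ℝ^d` (`d ≥ 2`), there is `C > 0`
with `N(B(x,R) ∩ K, r) ≤ C·R/r` for all `x ∈ K` and `0 < r < R`; in particular
`dim_A K ≤ 1`, where `K = {0} ∪ ⋃_j T_j`. -/
theorem Kset_coverNumber_le (d : ℕ) (hd : 2 ≤ d) (ξ : ℕ → EuclideanSpace ℝ (Fin d))
    (hξ : ∀ j, ‖ξ j‖ = 1) :
    (∃ C > (0 : ℝ), ∀ x ∈ Kset ξ, ∀ R > (0 : ℝ), ∀ r ∈ Set.Ioo 0 R,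
      (coverNumber (Metric.closedBall x R ∩ Kset ξ) r : ℝ) ≤ C * (R / r)) ∧
    assouadDim (Kset ξ) ≤ 1 := by
  have hbound (x : EuclideanSpace ℝ (Fin d)) {R r : ℝ} (hr : r ∈ Ioo 0 R) :
      (coverNumber (closedBall x R ∩ Kset ξ) r : ℝ) ≤ 91 * (R / r) := by
    obtain ⟨n, hn, hnR⟩ := exists_coverableBy_closedBall_inter_Kset (by omega) hξ x hr.1 hr.2.le
    exact (Nat.cast_le.2 hn.coverNumber_le).trans hnR
  refine ⟨⟨91, by norm_num, fun x _ R _ r hr => hbound x hr⟩, ?_⟩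
  refine csInf_le ⟨0, fun σ hσ => hσ.1⟩ ⟨zero_le_one, 91, by norm_num, fun x _ R _ r hr => ?_⟩
  rw [Real.rpow_one]
  exact hbound x hr
end

section
/- Let d ≥ 2 and 1 ≤ m ≤ d be integers and let (ξ_j)_{j≥0} be a sequence of m-tuples of unit vectors in ℝ^d whose set of terms {ξ_j : j ≥ 0} is dense in the m-fold product (S^{d−1})^m. Then the set K = {0} ∪ ⋃_{j≥0} D_j contains a (k,ε,{e_1,…,e_m})-AP for every integer k ≥ 3, every ε ∈ (0,1) and every linearly independent family {e_1,…,e_m} ∈ B^d_m. -/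
open Metric Set

/-! Normalise the `eᵢ` to unit vectors. By density some `ξ_j` is so close to them that the
rescaled tuple `wᵢ = ‖eᵢ‖ ξ_{ij}` is still linearly independent and each `wᵢ` lies within
`ε / (m (k-1)/2)` of `eᵢ`. The grid of `k^m` points centred at `2⁻ʲ e₁` with steps `Δ wᵢ` lies in
`D_j` once `Δ` is small, and moves each point of the grid with steps `Δ eᵢ` by at most `ε Δ`;
linear independence makes both grids consist of `k^m` distinct points. -/

open Function Finset

theorem LinearIndependent.injective_sum_smul {ι α R M : Type*} [Fintype ι] [Semiring R]
    [AddCommMonoid M] [Module R M] {v : ι → M} (hv : LinearIndependent R v) {g : α → R}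
    (hg : Injective g) : Injective fun x : ι → α => ∑ i, g (x i) • v i := fun _ _ hxy =>
  funext fun i => hg (congrFun (hv.fintypeLinearCombination_injective hxy) i)

theorem abs_natCast_sub_half_le {k : ℕ} (x : Fin k) :
    |((x : ℕ) : ℝ) - ((k : ℝ) - 1) / 2| ≤ ((k : ℝ) - 1) / 2 := by
  have hx : ((x : ℕ) : ℝ) + 1 ≤ k := by exact_mod_cast x.2
  rw [abs_le]
  constructor <;> linarith [(x : ℕ).cast_nonneg (α := ℝ)]

section CentredGrid

variable {ι E : Type*} [Fintype ι] [NormedAddCommGroup E] [NormedSpace ℝ E]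

noncomputable def centredGrid (k : ℕ) (a : E) (Δ : ℝ) (w : ι → E) (x : ι → Fin k) : E :=
  a + Δ • ∑ i, (((x i : ℕ) : ℝ) - ((k : ℝ) - 1) / 2) • w i

variable {k : ℕ} {a : E} {Δ : ℝ}

theorem centredGrid_eq_corner (w : ι → E) (x : ι → Fin k) :
    centredGrid k a Δ w x =
      (a - Δ • ∑ i, (((k : ℝ) - 1) / 2) • w i) + Δ • ∑ i, ((x i : ℕ) : ℝ) • w i := by
  simp only [centredGrid, sub_smul, sum_sub_distrib, smul_sub]
  abel

theorem centredGrid_injective {w : ι → E} (hw : LinearIndependent ℝ w) (hΔ : Δ ≠ 0) :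
    Injective (centredGrid k a Δ w) :=
  (add_right_injective a).comp <| (smul_right_injective E hΔ).comp <|
    hw.injective_sum_smul (g := fun x : Fin k => ((x : ℕ) : ℝ) - ((k : ℝ) - 1) / 2)
      fun x y hxy => Fin.ext <| by simpa using hxy

theorem dist_centredGrid_le {v w : ι → E} {η : ℝ} (hΔ : 0 ≤ Δ) (hvw : ∀ i, ‖v i - w i‖ ≤ η)
    (x : ι → Fin k) :
    dist (centredGrid k a Δ v x) (centredGrid k a Δ w x) ≤
      Δ * (Fintype.card ι * (((k : ℝ) - 1) / 2 * η)) := by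
  have hterm : ∀ i, ‖(((x i : ℕ) : ℝ) - ((k : ℝ) - 1) / 2) • (v i - w i)‖ ≤
      ((k : ℝ) - 1) / 2 * η := fun i => by
    rw [norm_smul, Real.norm_eq_abs]
    exact mul_le_mul (abs_natCast_sub_half_le (x i)) (hvw i) (norm_nonneg _)
      ((abs_nonneg _).trans (abs_natCast_sub_half_le (x i)))
  rw [dist_eq_norm, centredGrid, centredGrid, add_sub_add_left_eq_sub, ← smul_sub,
    ← sum_sub_distrib, norm_smul, Real.norm_of_nonneg hΔ]
  simp only [← smul_sub]
  gcongr
  simpa using norm_sum_le_of_le univ fun i _ => hterm i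

end CentredGrid

theorem isAPScale_range_centredGrid {d m k : ℕ} {ε η Δ : ℝ} {a : EuclideanSpace ℝ (Fin d)}
    {e w : Fin m → EuclideanSpace ℝ (Fin d)} (he : LinearIndependent ℝ e)
    (hw : LinearIndependent ℝ w) (hΔ : 0 < Δ) (hew : ∀ i, ‖e i - w i‖ ≤ η)
    (hηε : m * (((k : ℝ) - 1) / 2 * η) ≤ ε) :
    IsAPScale m k ε Δ e (range (centredGrid k a Δ w)) := by
  refine ⟨hΔ, range (centredGrid k a Δ e),
    ⟨a - Δ • ∑ i, (((k : ℝ) - 1) / 2) • e i, Set.ext fun p => ?_⟩, ?_, ?_⟩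
  · simp only [Set.mem_range, Set.mem_ofPred_eq, centredGrid_eq_corner, eq_comm]
  · rw [ncard_range_of_injective (centredGrid_injective hw hΔ.ne'),
      ncard_range_of_injective (centredGrid_injective he hΔ.ne')]
  · rintro _ ⟨x, rfl⟩
    calc Metric.infDist (centredGrid k a Δ e x) (range (centredGrid k a Δ w))
        ≤ dist (centredGrid k a Δ e x) (centredGrid k a Δ w x) :=
          Metric.infDist_le_dist_of_mem (mem_range_self x)
      _ ≤ Δ * (m * (((k : ℝ) - 1) / 2 * η)) := by
          simpa using dist_centredGrid_le hΔ.le hew x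
      _ ≤ ε * Δ := by rw [mul_comm ε]; gcongr

theorem range_centredGrid_subset_Dcell {d m k : ℕ} {Δ : ℝ}
    (ξ : ℕ → Fin m → EuclideanSpace ℝ (Fin d)) (j : ℕ) {s : Fin m → ℝ} (hΔ : 0 ≤ Δ)
    (hs : ∀ i, Δ * (((k : ℝ) - 1) / 2) * |s i| ≤ 1 / ((m : ℝ) * 2 ^ (j + 2))) :
    range (centredGrid k ((1 / 2 ^ j : ℝ) • stdE₁ d) Δ fun i => s i • ξ j i) ⊆ Dcell m ξ j := by
  rintro _ ⟨x, rfl⟩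
  refine ⟨fun i => Δ * (((x i : ℕ) : ℝ) - ((k : ℝ) - 1) / 2) * s i, fun i => abs_le.mp ?_, ?_⟩
  · rw [abs_mul, abs_mul, abs_of_nonneg hΔ]
    refine le_trans ?_ (hs i)
    gcongr
    exact abs_natCast_sub_half_le (x i)
  · simp only [centredGrid, smul_sum, smul_smul, mul_assoc, add_comm]

theorem exists_linearIndependent_norm_smul_near {ι E : Type*} [Fintype ι] [NormedAddCommGroup E]
    [NormedSpace ℝ E] [FiniteDimensional ℝ E] {ξ : ℕ → ι → E}
    (hdense : {u : ι → E | ∀ i, ‖u i‖ = 1} ⊆ closure (range ξ)) {e : ι → E}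
    (he : LinearIndependent ℝ e) {η : ℝ} (hη : 0 < η) :
    ∃ j, LinearIndependent ℝ (fun i => ‖e i‖ • ξ j i) ∧ ∀ i, ‖e i - ‖e i‖ • ξ j i‖ < η := by
  set rescale : (ι → E) → ι → E := fun v i => ‖e i‖ • v i
  have hcont : Continuous rescale :=
    continuous_pi fun i => continuous_const.smul (continuous_apply i)
  have hopen : IsOpen (rescale ⁻¹' ({w | LinearIndependent ℝ w} ∩ Metric.ball e η)) :=
    (isOpen_setOfPred_linearIndependent.inter Metric.isOpen_ball).preimage hcont
  have hunit : (fun i => ‖e i‖⁻¹ • e i) ∈ {u : ι → E | ∀ i, ‖u i‖ = 1} :=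
    fun i => norm_smul_inv_norm (he.ne_zero i)
  have hrescale : rescale (fun i => ‖e i‖⁻¹ • e i) = e :=
    funext fun i => smul_inv_smul₀ (norm_ne_zero_iff.mpr (he.ne_zero i)) _
  obtain ⟨_, ⟨hli, hnear⟩, j, rfl⟩ :=
    mem_closure_iff.mp (hdense hunit) _ hopen (by simp [hrescale, he, hη])
  refine ⟨j, hli, fun i => ?_⟩
  rw [← dist_eq_norm, dist_comm]
  exact (dist_le_pi_dist _ _ i).trans_lt hnear

theorem KsetD_contains_APs_general (d m : ℕ) (hm : 1 ≤ m)
    (ξ : ℕ → Fin m → EuclideanSpace ℝ (Fin d))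
    (hdense : {u : Fin m → EuclideanSpace ℝ (Fin d) | ∀ i, ‖u i‖ = 1} ⊆
      closure (Set.range ξ)) :
    ∀ k : ℕ, 3 ≤ k → ∀ ε ∈ Set.Ioo (0 : ℝ) 1,
      ∀ e : Fin m → EuclideanSpace ℝ (Fin d), LinearIndependent ℝ e →
        ∃ Q ⊆ KsetD m ξ, IsAP m k ε e Q := by
  intro k hk ε hε e he
  set κ : ℝ := ((k : ℝ) - 1) / 2 with hκdef
  have hκ : 0 < κ := by
    have : (3 : ℝ) ≤ k := by exact_mod_cast hk
    rw [hκdef]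
    linarith
  set M := ∑ i, ‖e i‖
  have hM : 0 < M :=
    sum_pos (fun i _ => norm_pos_iff.mpr (he.ne_zero i)) ⟨⟨0, hm⟩, mem_univ _⟩
  obtain ⟨j, hw, hnear⟩ := exists_linearIndependent_norm_smul_near hdense he
    (η := ε / (m * κ)) (div_pos hε.1 (by positivity))
  set r : ℝ := 1 / ((m : ℝ) * 2 ^ (j + 2))
  set Δ := r / (κ * M) with hΔr
  have hΔ : 0 < Δ := by positivity
  refine ⟨_, (range_centredGrid_subset_Dcell ξ j hΔ.le fun i => ?_).trans
    ((subset_iUnion (Dcell m ξ) j).trans subset_union_right),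
    Δ, isAPScale_range_centredGrid he hw hΔ (fun i => (hnear i).le) ?_⟩
  · calc Δ * κ * |‖e i‖| ≤ Δ * κ * M := by
          rw [abs_norm]
          gcongr
          exact single_le_sum (fun i _ => norm_nonneg (e i)) (mem_univ i)
      _ = r := by rw [hΔr]; field_simp
  · rw [← mul_assoc, mul_div_cancel₀ _ (by positivity)]

/-- If the `m`-tuples of unit vectors `ξ_j` are dense in `(S^{d-1})^m`, then
`K = {0} ∪ ⋃_j D_j` contains a `(k,ε,{e₁,…,eₘ})`-AP for every `k ≥ 3`, every `ε ∈ (0,1)`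
and every linearly independent family `{e₁,…,eₘ}`. -/
theorem KsetD_contains_APs (d m : ℕ) (hd : 2 ≤ d) (hm : 1 ≤ m) (hmd : m ≤ d)
    (ξ : ℕ → Fin m → EuclideanSpace ℝ (Fin d)) (hξ : ∀ j i, ‖ξ j i‖ = 1)
    (hdense : {u : Fin m → EuclideanSpace ℝ (Fin d) | ∀ i, ‖u i‖ = 1} ⊆
      closure (Set.range ξ)) :
    ∀ k : ℕ, 3 ≤ k → ∀ ε ∈ Set.Ioo (0 : ℝ) 1,
      ∀ e : Fin m → EuclideanSpace ℝ (Fin d), LinearIndependent ℝ e →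
        ∃ Q ⊆ KsetD m ξ, IsAP m k ε e Q :=
  KsetD_contains_APs_general d m hm ξ hdense
end
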